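/- arXiv:2203.05298 — 2 statements merged into one kernel-verified Lean document; each statement's English description precedes it below -/
import Mathlib

section
/- Let G be a signed digraph with vertex set V in which all cycles have the same sign (i.e., either every cycle of G is positive, or every cycle of G is negative), and let f be a Boolean network on G with exactly one fixed point. Then there is a word π in which every vertex of V occurs exactly once, such that every word containing π as a (not necessarily contiguous) subsequence synchronizes f; in particular, π itself synchronizes f. -/
/-- A signed digraph on vertex set `V`, given by its positive and negative arc relations. -/
structure SignedDigraph (V : Type*) where
  pos : V → V → Prop
  neg : V → V → Prop

/-- The last vertex of a walk starting at `u` with the given steps. -/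
def walkEnd {V : Type*} (u : V) (steps : List (V × Bool)) : V :=
  (steps.map Prod.fst).getLastD u

/-- The sign of a walk (`true` = positive): positive iff the number of
negative (`false`) arcs is even. -/
def walkSign {V : Type*} (steps : List (V × Bool)) : Bool :=
  steps.foldl (fun acc step => acc == step.2) true

namespace SignedDigraph

variable {V : Type*}

/-- Arc of the underlying digraph. -/
def Arc (G : SignedDigraph V) (j i : V) : Prop := G.pos j i ∨ G.neg j i

/-- `G.IsWalk u steps`: `steps` is a list of (next vertex, sign of arc) pairs
describing a walk in `G` starting at `u`. -/
def IsWalk (G : SignedDigraph V) : V → List (V × Bool) → Prop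
  | _, [] => True
  | u, step :: rest =>
      (if step.2 then G.pos u step.1 else G.neg u step.1) ∧ G.IsWalk step.1 rest

/-- A (simple) path from `u`: a walk with pairwise distinct vertices. -/
def IsPath (G : SignedDigraph V) (u : V) (steps : List (V × Bool)) : Prop :=
  G.IsWalk u steps ∧ (u :: steps.map Prod.fst).Nodup

/-- A (simple) path from `u` to `v`. -/
def IsPathFrom (G : SignedDigraph V) (u : V) (steps : List (V × Bool)) (v : V) : Prop :=
  G.IsPath u steps ∧ walkEnd u steps = v

/-- A cycle through `u`: a nonempty closed walk from `u` back to `u` with no repeated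
vertex except the endpoint. -/
def IsCycle (G : SignedDigraph V) (u : V) (steps : List (V × Bool)) : Prop :=
  steps ≠ [] ∧ G.IsWalk u steps ∧ walkEnd u steps = u ∧
    (u :: (steps.map Prod.fst).dropLast).Nodup

/-- `G` has no positive cycle. -/
def NoPositiveCycle (G : SignedDigraph V) : Prop :=
  ∀ u steps, G.IsCycle u steps → walkSign steps = false

/-- `G` has no negative cycle. -/
def NoNegativeCycle (G : SignedDigraph V) : Prop :=
  ∀ u steps, G.IsCycle u steps → walkSign steps = true

/-- Reachability in the underlying digraph. -/
def Reach (G : SignedDigraph V) (u v : V) : Prop :=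
  ∃ steps, G.IsWalk u steps ∧ walkEnd u steps = v

/-- The underlying digraph of `G` is strongly connected. -/
def StronglyConnected (G : SignedDigraph V) : Prop := ∀ u v, G.Reach u v

/-- `u` and `v` lie in the same strong component. -/
def SameComp (G : SignedDigraph V) (u v : V) : Prop := G.Reach u v ∧ G.Reach v u

/-- The strong component of `u`. -/
def comp (G : SignedDigraph V) (u : V) : Set V := {v | G.SameComp u v}

/-- The in-degree of `i`: the number of arcs (with their signs) entering `i`. -/
noncomputable def inDegree (G : SignedDigraph V) (i : V) : ℕ :=
  {j | G.pos j i}.ncard + {j | G.neg j i}.ncard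

/-- A source: a vertex with no in-coming arc. -/
def IsSource (G : SignedDigraph V) (i : V) : Prop := ∀ j, ¬ G.Arc j i

/-- `G` has no sources. -/
def NoSource (G : SignedDigraph V) : Prop := ∀ i, ¬ G.IsSource i

/-- The subgraph induced on a set `S` of vertices. -/
def induce (G : SignedDigraph V) (S : Set V) : SignedDigraph V where
  pos j i := j ∈ S ∧ i ∈ S ∧ G.pos j i
  neg j i := j ∈ S ∧ i ∈ S ∧ G.neg j i

/-- The underlying digraph of `G` restricted to `S` is a cycle: `S` is nonempty,
every vertex of `S` has exactly one in-coming arc inside `S`, and `S` is strongly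
connected inside `S`. -/
def IsCycleGraphOn (G : SignedDigraph V) (S : Set V) : Prop :=
  S.Nonempty ∧ (∀ i ∈ S, (G.induce S).inDegree i = 1) ∧
    ∀ u ∈ S, ∀ v ∈ S, (G.induce S).Reach u v

/-- The underlying digraph of `G` is a cycle. -/
def IsCycleGraph (G : SignedDigraph V) : Prop := G.IsCycleGraphOn Set.univ

/-- `S` is an initial strong component of `G`. -/
def IsInitialComponent (G : SignedDigraph V) (S : Set V) : Prop :=
  (∃ u, S = G.comp u) ∧ ∀ j i, i ∈ S → G.Arc j i → j ∈ S

/-- `G` has an initial cycle: an initial strong component whose underlying digraph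
is a cycle. -/
def HasInitialCycle (G : SignedDigraph V) : Prop :=
  ∃ S : Set V, G.IsInitialComponent S ∧ G.IsCycleGraphOn S

/-- A forward path: a nonempty path whose last arc joins two distinct strong
components. -/
def IsForwardPath (G : SignedDigraph V) (u : V) (steps : List (V × Bool)) (v : V) : Prop :=
  G.IsPathFrom u steps v ∧ steps ≠ [] ∧ ¬ G.SameComp (walkEnd u steps.dropLast) v

/-- `G` is `i`-homogenous: every strong component contains a vertex `j` such that
all forward paths from `j` to `i` have the same sign. -/
def IsHomogenousAt (G : SignedDigraph V) (i : V) : Prop :=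
  ∀ u : V, ∃ j, G.SameComp u j ∧
    ∀ steps₁ steps₂, G.IsForwardPath j steps₁ i → G.IsForwardPath j steps₂ i →
      walkSign steps₁ = walkSign steps₂

/-- `G` is homogenous. -/
def IsHomogenous (G : SignedDigraph V) : Prop := ∀ i, G.IsHomogenousAt i

/-- `G` is simple: no pair of parallel arcs of opposite signs. -/
def IsSimple (G : SignedDigraph V) : Prop := ∀ j i, ¬ (G.pos j i ∧ G.neg j i)

end SignedDigraph

section BooleanNetwork

variable {V : Type*} [DecidableEq V]

/-- Asynchronous update of component `i` of the Boolean network `f`. -/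
def localUpdate (f : (V → Bool) → V → Bool) (i : V) (x : V → Bool) : V → Bool :=
  Function.update x i (f x i)

/-- `f^w` : for `w = i₁,…,i_ℓ`, `wordUpdate f w = f^{i_ℓ} ∘ ⋯ ∘ f^{i₁}`. -/
def wordUpdate (f : (V → Bool) → V → Bool) (w : List V) (x : V → Bool) : V → Bool :=
  w.foldl (fun y i => localUpdate f i y) x

/-- `w` is a synchronizing word for `f`: `f^w` is constant. -/
def SyncWord (f : (V → Bool) → V → Bool) (w : List V) : Prop :=
  ∃ c : V → Bool, ∀ x, wordUpdate f w x = c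

/-- `f` is synchronizing. -/
def Synchronizing (f : (V → Bool) → V → Bool) : Prop := ∃ w, SyncWord f w

/-- Positive arc of the signed interaction digraph of `f`. -/
def posIArc (f : (V → Bool) → V → Bool) (j i : V) : Prop :=
  ∃ x : V → Bool, x j = false ∧ f x i = false ∧ f (Function.update x j true) i = true

/-- Negative arc of the signed interaction digraph of `f`. -/
def negIArc (f : (V → Bool) → V → Bool) (j i : V) : Prop :=
  ∃ x : V → Bool, x j = false ∧ f x i = true ∧ f (Function.update x j true) i = false

/-- `f` is a Boolean network on `G`: the signed interaction digraph of `f` is `G`. -/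
def IsBNOn (f : (V → Bool) → V → Bool) (G : SignedDigraph V) : Prop :=
  (∀ j i, G.pos j i ↔ posIArc f j i) ∧ (∀ j i, G.neg j i ↔ negIArc f j i)

/-- Component `i` of `f` is a conjunction with respect to `G`. -/
def IsConjunction (G : SignedDigraph V) (f : (V → Bool) → V → Bool) (i : V) : Prop :=
  ∀ x : V → Bool, (f x i = true ↔
    (∀ j, G.pos j i → x j = true) ∧ (∀ j, G.neg j i → x j = false))

/-- Component `i` of `f` is a disjunction with respect to `G`. -/
def IsDisjunction (G : SignedDigraph V) (f : (V → Bool) → V → Bool) (i : V) : Prop :=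
  ∀ x : V → Bool, (f x i = false ↔
    (∀ j, G.pos j i → x j = false) ∧ (∀ j, G.neg j i → x j = true))

/-- `f` is an and-or-net on `G`. -/
def IsAndOrNet (G : SignedDigraph V) (f : (V → Bool) → V → Bool) : Prop :=
  IsBNOn f G ∧ ∀ i, IsConjunction G f i ∨ IsDisjunction G f i

/-- `f` is the and-net on `G`. -/
def IsAndNet (G : SignedDigraph V) (f : (V → Bool) → V → Bool) : Prop :=
  IsBNOn f G ∧ ∀ i, IsConjunction G f i

/-- `w` is a canalizing word from `(i, a)` with image `b`. -/
def Canalizing (f : (V → Bool) → V → Bool) (i : V) (a : Bool) (w : List V)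
    (b : V → Bool) : Prop :=
  i ∉ w ∧ w.Nodup ∧ ∀ x : V → Bool, x i = a → ∀ j ∈ w, wordUpdate f w x j = b j

end BooleanNetwork

/-!
Let `x` be the unique fixed point and say that `f` traps `x` on `A ⊆ V` if every configuration
agreeing with `x` on `A` is mapped to one that still does. If `f` traps `x` on `A ≠ V`, freezing
the components in `A` to `x` yields a network whose cycles still share a sign and whose only fixed
point is still `x`; such a network has a constant component `v ∉ A`, and `f` traps `x` on
`A ∪ {v}`. Listing the vertices in the order in which they are added gives `π`: along a word
containing `π`, each `v` is set to `x v` at its update and is never changed afterwards.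

A constant component exists because otherwise every arc tail would have an in-arc. Without
negative cycles, an initial strong component is then balanced by some `σ`, and both `σ` and `!σ`
are trapped on it; each extends to a fixed point by the same freezing induction, giving two fixed
points. Without positive cycles, at `x` every non-constant component `i` has an in-arc `j → i` of
sign `x j == x i`; following such arcs backwards closes a cycle whose sign telescopes to positive.
-/

section Walks

variable {V : Type*}

@[simp] lemma walkEnd_nil (u : V) : walkEnd u [] = u := rfl

@[simp] lemma walkEnd_cons (u : V) (p : V × Bool) (l : List (V × Bool)) :
    walkEnd u (p :: l) = walkEnd p.1 l := by
  rw [walkEnd, List.map_cons, List.getLastD_cons, walkEnd]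

lemma walkEnd_append (u : V) (A B : List (V × Bool)) :
    walkEnd u (A ++ B) = walkEnd (walkEnd u A) B := by
  induction A generalizing u with
  | nil => rfl
  | cons p A ih => simp [ih]

lemma foldl_beq_eq_beq_walkSign (l : List (V × Bool)) (a : Bool) :
    l.foldl (fun acc step => acc == step.2) a = (a == walkSign l) := by
  induction l generalizing a with
  | nil => cases a <;> rfl
  | cons p l ih =>
    change l.foldl _ (a == p.2) = (a == l.foldl _ (true == p.2))
    rw [ih, ih]
    cases a <;> cases p.2 <;> simp

@[simp] lemma walkSign_nil : walkSign ([] : List (V × Bool)) = true := rfl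

@[simp] lemma walkSign_cons (p : V × Bool) (l : List (V × Bool)) :
    walkSign (p :: l) = (p.2 == walkSign l) := by
  change l.foldl _ (true == p.2) = _
  rw [foldl_beq_eq_beq_walkSign]
  cases p.2 <;> rfl

lemma walkSign_append (A B : List (V × Bool)) :
    walkSign (A ++ B) = (walkSign A == walkSign B) := by
  rw [walkSign, List.foldl_append]
  exact foldl_beq_eq_beq_walkSign B _

lemma walkEnd_take_eq_getElem (u : V) (steps : List (V × Bool)) (k : ℕ)
    (hk : k < (u :: (steps.map Prod.fst).dropLast).length) :
    (u :: (steps.map Prod.fst).dropLast)[k] = walkEnd u (steps.take k) := by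
  cases k with
  | zero => rfl
  | succ k =>
    have hk' : k < steps.length := by
      simp only [List.length_cons, List.length_dropLast, List.length_map] at hk; omega
    rw [List.take_add_one, List.getElem?_eq_getElem hk', walkEnd_append]
    simp [List.getElem_dropLast]

lemma exists_split_of_not_nodup {u : V} {steps : List (V × Bool)}
    (hnd : ¬ (u :: (steps.map Prod.fst).dropLast).Nodup) :
    ∃ A B C, steps = A ++ B ++ C ∧ B ≠ [] ∧ C ≠ [] ∧
      walkEnd (walkEnd u A) B = walkEnd u A := by
  rw [List.Nodup, List.pairwise_iff_getElem] at hnd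
  push Not at hnd
  obtain ⟨i, j, hi, hj, hij, heq⟩ := hnd
  have hjlen : j < steps.length := by
    simp only [List.length_cons, List.length_dropLast, List.length_map] at hj; omega
  refine ⟨steps.take i, (steps.drop i).take (j - i), steps.drop j, ?_, ?_, ?_, ?_⟩
  · rw [← List.take_add, Nat.add_sub_cancel' hij.le, List.take_append_drop]
  · simp only [ne_eq, List.take_eq_nil_iff, List.drop_eq_nil_iff, not_or, not_le]; omega
  · simp only [ne_eq, List.drop_eq_nil_iff, not_le]; omega
  · rw [← walkEnd_append, ← List.take_add, Nat.add_sub_cancel' hij.le,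
      ← walkEnd_take_eq_getElem u steps j hj, ← walkEnd_take_eq_getElem u steps i hi, heq]

end Walks

namespace SignedDigraph

variable {V : Type*} (G H : SignedDigraph V)

def SArc (j i : V) (s : Bool) : Prop := if s then G.pos j i else G.neg j i

instance : LE (SignedDigraph V) := ⟨fun G H => ∀ j i s, G.SArc j i s → H.SArc j i s⟩

variable {G H}

lemma arc_iff_exists_sArc {j i : V} : G.Arc j i ↔ ∃ s, G.SArc j i s := by
  simp [Arc, SArc, or_comm]

@[simp] lemma isWalk_nil (u : V) : G.IsWalk u [] := trivial

@[simp] lemma isWalk_cons {u : V} {p : V × Bool} {l : List (V × Bool)} :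
    G.IsWalk u (p :: l) ↔ G.SArc u p.1 p.2 ∧ G.IsWalk p.1 l := Iff.rfl

lemma isWalk_append {u : V} {A B : List (V × Bool)} :
    G.IsWalk u (A ++ B) ↔ G.IsWalk u A ∧ G.IsWalk (walkEnd u A) B := by
  induction A generalizing u with
  | nil => simp
  | cons p A ih => simp [ih, and_assoc]

lemma IsWalk.mono (hGH : G ≤ H) {u : V} {steps : List (V × Bool)} (h : G.IsWalk u steps) :
    H.IsWalk u steps := by
  induction steps generalizing u with
  | nil => trivial
  | cons p l ih => exact ⟨hGH _ _ _ h.1, ih h.2⟩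

lemma IsCycle.mono (hGH : G ≤ H) {u : V} {steps : List (V × Bool)} (h : G.IsCycle u steps) :
    H.IsCycle u steps :=
  ⟨h.1, h.2.1.mono hGH, h.2.2⟩

lemma NoNegativeCycle.mono (hGH : G ≤ H) (h : H.NoNegativeCycle) : G.NoNegativeCycle :=
  fun u steps hc => h u steps (hc.mono hGH)

lemma NoPositiveCycle.mono (hGH : G ≤ H) (h : H.NoPositiveCycle) : G.NoPositiveCycle :=
  fun u steps hc => h u steps (hc.mono hGH)

theorem closedWalk_induction {P : V → List (V × Bool) → Prop}
    (hcycle : ∀ u steps, G.IsCycle u steps → P u steps)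
    (hinsert : ∀ u w A B C, P w B → P u (A ++ C) → P u (A ++ B ++ C))
    {u : V} {steps : List (V × Bool)} (hne : steps ≠ []) (hw : G.IsWalk u steps)
    (hc : walkEnd u steps = u) : P u steps := by
  induction hn : steps.length using Nat.strong_induction_on generalizing u steps with
  | _ n ih =>
  by_cases hnd : (u :: (steps.map Prod.fst).dropLast).Nodup
  · exact hcycle u steps ⟨hne, hw, hc, hnd⟩
  obtain ⟨A, B, C, rfl, hB, hC, hBc⟩ := exists_split_of_not_nodup hnd
  simp only [isWalk_append, walkEnd_append, hBc] at hw hc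
  simp only [List.length_append] at hn
  have hB' : 0 < B.length := List.length_pos_iff.2 hB
  have hC' : 0 < C.length := List.length_pos_iff.2 hC
  refine hinsert u _ A B C (ih B.length (by omega) hB hw.1.2 hBc rfl) ?_
  exact ih (A ++ C).length (by simp only [List.length_append]; omega) (by simp [hC])
    (isWalk_append.2 ⟨hw.1.1, hw.2⟩) (by rw [walkEnd_append, hc]) rfl

theorem exists_isCycle_of_closedWalk {u : V} {steps : List (V × Bool)} (hne : steps ≠ [])
    (hw : G.IsWalk u steps) (hc : walkEnd u steps = u) : ∃ v cyc, G.IsCycle v cyc :=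
  closedWalk_induction (P := fun _ _ => ∃ v cyc, G.IsCycle v cyc) (fun v cyc h => ⟨v, cyc, h⟩)
    (fun _ _ _ _ _ h _ => h) hne hw hc

theorem NoNegativeCycle.walkSign_eq_true (hG : G.NoNegativeCycle) {u : V}
    {steps : List (V × Bool)} (hw : G.IsWalk u steps) (hc : walkEnd u steps = u) :
    walkSign steps = true := by
  rcases eq_or_ne steps [] with rfl | hne
  · rfl
  refine closedWalk_induction (P := fun _ steps => walkSign steps = true) hG ?_ hne hw hc
  intro _ _ A B C hB hAC
  rw [walkSign_append] at hAC
  rw [walkSign_append, walkSign_append, hB]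
  revert hAC
  cases walkSign A <;> cases walkSign C <;> simp

lemma reach_refl (u : V) : G.Reach u u := ⟨[], trivial, rfl⟩

lemma Reach.trans {u v w : V} (h₁ : G.Reach u v) (h₂ : G.Reach v w) : G.Reach u w := by
  obtain ⟨s₁, hw₁, rfl⟩ := h₁
  obtain ⟨s₂, hw₂, rfl⟩ := h₂
  exact ⟨s₁ ++ s₂, isWalk_append.2 ⟨hw₁, hw₂⟩, walkEnd_append _ _ _⟩

lemma reach_of_arc {u v : V} (h : G.Arc u v) : G.Reach u v := by
  obtain ⟨s, hs⟩ := arc_iff_exists_sArc.1 h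
  exact ⟨[(v, s)], ⟨hs, trivial⟩, rfl⟩

/-- The parity of walks from `u₀` is a potential for the arc signs in the strong component of
`u₀`. -/
theorem NoNegativeCycle.exists_balanced (hG : G.NoNegativeCycle) (u₀ : V) :
    ∃ σ : V → Bool, ∀ j i s, G.Reach u₀ j → G.Reach i u₀ → G.SArc j i s → s = (σ j == σ i) := by
  classical
  have hsign : ∀ W B, G.IsWalk u₀ W → G.IsWalk (walkEnd u₀ W) B →
      walkEnd (walkEnd u₀ W) B = u₀ → walkSign W = walkSign B := by
    intro W B hW hB hc
    have := hG.walkSign_eq_true (isWalk_append.2 ⟨hW, hB⟩) (by rwa [walkEnd_append])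
    rwa [walkSign_append, beq_iff_eq] at this
  refine ⟨fun v => if h : G.Reach u₀ v then walkSign h.choose else false, ?_⟩
  intro j i s hj ⟨B, hB, hBe⟩ harc
  obtain ⟨hWj, hWje⟩ := hj.choose_spec
  have hi : G.Reach u₀ i := hj.trans (reach_of_arc (arc_iff_exists_sArc.2 ⟨s, harc⟩))
  obtain ⟨hWi, hWie⟩ := hi.choose_spec
  have h₁ := hsign (hj.choose ++ [(i, s)]) B
    (isWalk_append.2 ⟨hWj, by rw [hWje]; exact ⟨harc, trivial⟩⟩)
    (by simpa [walkEnd_append] using hB) (by simpa [walkEnd_append] using hBe)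
  have h₂ := hsign hi.choose B hWi (by rwa [hWie]) (by rwa [hWie])
  simp only [dif_pos hj, dif_pos hi, h₂, ← h₁, walkSign_append]
  cases walkSign hj.choose <;> cases s <;> rfl

theorem exists_initial [Fintype V] {N : Finset V} (hN : N.Nonempty)
    (htail : ∀ j i, G.Arc j i → j ∈ N) :
    ∃ u₀ ∈ N, ∀ j i, G.Arc j i → G.SameComp u₀ i → G.SameComp u₀ j := by
  classical
  obtain ⟨u₀, hu₀, hmin⟩ := N.exists_min_image (fun v => (Finset.univ.filter (G.Reach · v)).card) hN
  refine ⟨u₀, hu₀, fun j i harc hi => ⟨?_, (reach_of_arc harc).trans hi.2⟩⟩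
  have hsub : Finset.univ.filter (G.Reach · j) ⊆ Finset.univ.filter (G.Reach · u₀) := by
    intro z hz
    simp only [Finset.mem_filter, Finset.mem_univ, true_and] at hz ⊢
    exact hz.trans ((reach_of_arc harc).trans hi.2)
  have heq := Finset.eq_of_subset_of_card_le hsub (hmin j (htail j i harc))
  have hu₀j : u₀ ∈ Finset.univ.filter (G.Reach · j) := by
    rw [heq]; simpa using reach_refl u₀
  simpa using hu₀j

variable (G) in
def coherentPart (x : V → Bool) : SignedDigraph V where
  pos j i := G.pos j i ∧ x j = x i
  neg j i := G.neg j i ∧ x j ≠ x i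

lemma sArc_coherentPart {x : V → Bool} {j i : V} {s : Bool} :
    (G.coherentPart x).SArc j i s ↔ G.SArc j i s ∧ s = (x j == x i) := by
  cases s <;> by_cases h : x j = x i <;> simp [SArc, coherentPart, h]

lemma coherentPart_le (x : V → Bool) : G.coherentPart x ≤ G :=
  fun _ _ _ h => (sArc_coherentPart.1 h).1

lemma walkSign_of_isWalk_coherentPart {x : V → Bool} {u : V} {steps : List (V × Bool)}
    (h : (G.coherentPart x).IsWalk u steps) : walkSign steps = (x u == x (walkEnd u steps)) := by
  induction steps generalizing u with
  | nil => simp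
  | cons p l ih =>
    obtain ⟨harc, hl⟩ := h
    rw [walkSign_cons, walkEnd_cons, ih hl, (sArc_coherentPart.1 harc).2]
    cases x u <;> cases x p.1 <;> cases x (walkEnd p.1 l) <;> rfl

theorem exists_isCycle_of_forall_exists_arc [Finite V] {N : Set V} (hN : N.Nonempty)
    (hpred : ∀ v ∈ N, ∃ u ∈ N, G.Arc u v) : ∃ v cyc, G.IsCycle v cyc := by
  choose! p hpN hparc using hpred
  obtain ⟨v₀, hv₀⟩ := hN
  set seq : ℕ → V := fun n => p^[n] v₀
  have hseq_succ (n : ℕ) : seq (n + 1) = p (seq n) := Function.iterate_succ_apply' p n v₀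
  have hseqN (n : ℕ) : seq n ∈ N := by
    induction n with
    | zero => exact hv₀
    | succ n ih => rw [hseq_succ]; exact hpN _ ih
  have hwalk (a d : ℕ) : ∃ steps : List (V × Bool), steps.length = d ∧
      G.IsWalk (seq (a + d)) steps ∧ walkEnd (seq (a + d)) steps = seq a := by
    induction d with
    | zero => exact ⟨[], rfl, trivial, rfl⟩
    | succ d ih =>
      obtain ⟨steps, hlen, hw, he⟩ := ih
      obtain ⟨s, hs⟩ := arc_iff_exists_sArc.1 (hparc _ (hseqN (a + d)))
      refine ⟨(seq (a + d), s) :: steps, by simp [hlen], ⟨?_, hw⟩, by simpa using he⟩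
      rwa [← add_assoc, hseq_succ]
  obtain ⟨a, b, hab, heq⟩ := Finite.exists_ne_map_eq_of_infinite seq
  wlog hlt : a < b generalizing a b
  · exact this b a hab.symm heq.symm (by omega)
  obtain ⟨steps, hlen, hw, he⟩ := hwalk a (b - a)
  rw [Nat.add_sub_cancel' hlt.le] at hw he
  exact exists_isCycle_of_closedWalk (List.ne_nil_of_length_pos (by omega)) hw (he.trans heq)

end SignedDigraph

theorem update_chain_induction {V α : Type*} [Fintype V] [DecidableEq V] {P : (V → α) → Prop}
    {z z' : V → α} (h₀ : P z) (hstep : ∀ y j, y j = z j → P y → P (Function.update y j (z' j))) :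
    P z' := by
  suffices ∀ D : Finset V, ∀ y, (∀ k ∈ D, y k = z k) → (∀ k ∉ D, y k = z' k) → P y → P z' from
    this Finset.univ z (fun _ _ => rfl) (by simp) h₀
  intro D
  induction D using Finset.induction_on with
  | empty =>
    intro y _ hy hP
    rwa [show z' = y from funext fun k => (hy k (Finset.notMem_empty k)).symm]
  | insert a D ha ih =>
    intro y hyz hyz' hP
    refine ih _ (fun k hk => ?_) (fun k hk => ?_) (hstep y a (hyz a (D.mem_insert_self a)) hP)
    · rw [Function.update_of_ne (by rintro rfl; exact ha hk)]
      exact hyz k (Finset.mem_insert_of_mem hk)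
    · rcases eq_or_ne k a with rfl | hka
      · exact Function.update_self ..
      · rw [Function.update_of_ne hka]
        exact hyz' k (by simp [hka, hk])

section BooleanNetwork

variable {V : Type*} [DecidableEq V] {f : (V → Bool) → V → Bool}

variable (f) in
/-- `posIArc` and `negIArc` as one predicate, indexed by the sign (`true` = positive). -/
def IArc (j i : V) (s : Bool) : Prop :=
  ∃ x : V → Bool, x j = false ∧ f x i = !s ∧ f (Function.update x j true) i = s

variable (f) in
def interactionGraph : SignedDigraph V := ⟨posIArc f, negIArc f⟩

@[simp] lemma sArc_interactionGraph {j i : V} {s : Bool} :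
    (interactionGraph f).SArc j i s ↔ IArc f j i s := by
  cases s <;> rfl

lemma IsBNOn.eq_interactionGraph {G : SignedDigraph V} (hf : IsBNOn f G) :
    G = interactionGraph f := by
  cases G
  simp only [interactionGraph, SignedDigraph.mk.injEq]
  exact ⟨funext₂ fun j i => propext (hf.1 j i), funext₂ fun j i => propext (hf.2 j i)⟩

variable (f) in
def HasInArc (i : V) : Prop := ∃ j s, IArc f j i s

lemma iArc_of_apply_update_ne {y : V → Bool} {j i : V} {b : Bool}
    (h : f (Function.update y j b) i ≠ f y i) : IArc f j i (y j == f y i) := by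
  have hb : b = !y j := Bool.eq_not_of_ne fun hb => h (by rw [hb, Function.update_eq_self])
  have hflip : f (Function.update y j b) i = !f y i := Bool.eq_not_of_ne h
  subst hb
  cases hyj : y j
  · rw [hyj] at hflip
    exact ⟨y, hyj, by simp, by simpa using hflip⟩
  · rw [hyj] at hflip
    refine ⟨Function.update y j false, Function.update_self .., by simpa using hflip, ?_⟩
    rw [Function.update_idem, Function.update_eq_self_iff.2 hyj.symm]
    simp

variable (f) in
def Traps (A : Finset V) (c : V → Bool) : Prop :=
  ∀ z, (∀ a ∈ A, z a = c a) → ∀ a ∈ A, f z a = c a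

variable (f) in
def freeze (A : Finset V) (c : V → Bool) : (V → Bool) → V → Bool :=
  fun z => f (A.piecewise c z)

variable {A : Finset V} {c : V → Bool}

lemma freeze_eq_of_agree {z : V → Bool} (hz : ∀ a ∈ A, z a = c a) : freeze f A c z = f z := by
  unfold freeze
  congr 1
  funext k
  by_cases hk : k ∈ A <;> simp [hk, hz]

lemma iArc_freeze {j i : V} {s : Bool} (h : IArc (freeze f A c) j i s) : j ∉ A ∧ IArc f j i s := by
  obtain ⟨z, hzj, h₀, h₁⟩ := h
  have hj : j ∉ A := by
    intro hj
    have : A.piecewise c (Function.update z j true) = A.piecewise c z :=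
      A.piecewise_congr (fun _ _ => rfl) fun k hk =>
        Function.update_of_ne (by rintro rfl; exact hk hj) ..
    rw [freeze, this] at h₁
    rw [freeze, h₁] at h₀
    cases s <;> simp at h₀
  refine ⟨hj, A.piecewise c z, by rwa [A.piecewise_eq_of_notMem _ _ hj], h₀, ?_⟩
  rwa [Finset.update_piecewise_of_notMem _ _ _ hj]

lemma interactionGraph_freeze_le : interactionGraph (freeze f A c) ≤ interactionGraph f :=
  fun _ _ _ h => sArc_interactionGraph.2 (iArc_freeze (sArc_interactionGraph.1 h)).2

lemma Traps.freeze_apply_of_mem (hA : Traps f A c) (z : V → Bool) {a : V} (ha : a ∈ A) :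
    freeze f A c z a = c a :=
  hA _ (fun _ ha' => A.piecewise_eq_of_mem _ _ ha') a ha

lemma Traps.union {S : Finset V} {σ : V → Bool} (hA : Traps f A c)
    (hS : Traps (freeze f A c) S σ) (hSA : Disjoint S A) : Traps f (S ∪ A) (S.piecewise σ c) := by
  intro z hz a ha
  have hzA : ∀ a ∈ A, z a = c a := fun a ha => by
    rw [hz a (Finset.mem_union_right _ ha),
      S.piecewise_eq_of_notMem _ _ (Finset.disjoint_right.1 hSA ha)]
  rcases Finset.mem_union.1 ha with haS | haA
  · rw [S.piecewise_eq_of_mem _ _ haS, ← freeze_eq_of_agree (f := f) hzA]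
    exact hS z (fun s hs => by rw [hz s (Finset.mem_union_left _ hs), S.piecewise_eq_of_mem _ _ hs])
      a haS
  · rw [S.piecewise_eq_of_notMem _ _ (Finset.disjoint_right.1 hSA haA)]
    exact hA z hzA a haA

lemma Traps.freeze_fixedPoint_iff (hA : Traps f A c) {y : V → Bool} :
    freeze f A c y = y ↔ f y = y ∧ ∀ a ∈ A, y a = c a := by
  constructor
  · intro hy
    have hyA : ∀ a ∈ A, y a = c a := fun a ha => by
      rw [← hy]; exact hA.freeze_apply_of_mem y ha
    exact ⟨by rwa [← freeze_eq_of_agree (f := f) hyA], hyA⟩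
  · rintro ⟨hy, hyA⟩
    rwa [freeze_eq_of_agree hyA]

variable [Fintype V]

lemma hasInArc_iff_exists_apply_ne {i : V} : HasInArc f i ↔ ∃ z z', f z i ≠ f z' i := by
  constructor
  · rintro ⟨j, s, x, -, h₀, h₁⟩
    exact ⟨x, Function.update x j true, by rw [h₀, h₁]; cases s <;> simp⟩
  · rintro ⟨z, z', hne⟩
    by_contra hno
    refine hne (update_chain_induction (P := fun y => f y i = f z i) rfl ?_).symm
    intro y j _ hP
    by_contra h
    have hne : f (Function.update y j (z' j)) i ≠ f y i := by rwa [hP]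
    exact hno ⟨j, _, iArc_of_apply_update_ne hne⟩

lemma exists_coherent_iArc {x : V → Bool} (hx : f x = x) {i : V} (hi : HasInArc f i) :
    ∃ j, IArc f j i (x j == x i) := by
  obtain ⟨z, hz⟩ : ∃ z, f z i ≠ x i := by
    obtain ⟨z, z', hne⟩ := hasInArc_iff_exists_apply_ne.1 hi
    by_cases h : f z i = x i
    · exact ⟨z', by rwa [← h, ne_comm]⟩
    · exact ⟨z, h⟩
  by_contra hno
  refine hz (update_chain_induction (P := fun y => f y i = x i) (congrFun hx i) ?_)
  intro y j hyj hP
  by_contra h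
  have hne : f (Function.update y j (z j)) i ≠ f y i := by rwa [hP]
  have harc := iArc_of_apply_update_ne hne
  rw [hyj, hP] at harc
  exact hno ⟨j, harc⟩

lemma apply_eq_of_not_hasInArc {i : V} (hi : ¬ HasInArc f i) (z z' : V → Bool) :
    f z i = f z' i := by
  by_contra h
  exact hi (hasInArc_iff_exists_apply_ne.2 ⟨z, z', h⟩)

theorem traps_of_balanced {S : Finset V} {σ : V → Bool}
    (hbal : ∀ i ∈ S, ∀ j s, IArc f j i s → j ∈ S ∧ s = (σ j == σ i))
    (hin : ∀ i ∈ S, HasInArc f i) : Traps f S σ := by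
  intro z hz i hi
  by_contra hzi
  obtain ⟨y₁, y₂, hne⟩ := hasInArc_iff_exists_apply_ne.1 (hin i hi)
  -- by balance, flipping a coordinate of `S` away from `σ` cannot bring `f · i` back to `σ i`
  suffices hconst : ∀ z', f z' i = f z i from hne ((hconst y₁).trans (hconst y₂).symm)
  intro z'
  refine update_chain_induction (P := fun y => f y i = f z i) rfl ?_
  intro y j hyj hP
  by_contra h
  have hne' : f (Function.update y j (z' j)) i ≠ f y i := by rwa [hP]
  obtain ⟨hjS, hs⟩ := hbal i hi j _ (iArc_of_apply_update_ne hne')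
  rw [hyj, hz j hjS, hP, Bool.eq_not_of_ne hzi] at hs
  revert hs
  cases σ j <;> cases σ i <;> simp

lemma Traps.not_hasInArc_freeze (hA : Traps f A c) {a : V} (ha : a ∈ A) :
    ¬ HasInArc (freeze f A c) a := by
  rw [hasInArc_iff_exists_apply_ne]
  rintro ⟨z, z', h⟩
  exact h (by rw [hA.freeze_apply_of_mem z ha, hA.freeze_apply_of_mem z' ha])

/-- An initial strong component of the non-constant components, balanced by the parity of walks,
traps both the balancing pattern and its negation. -/
theorem exists_traps_and_traps_not (hNN : (interactionGraph f).NoNegativeCycle)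
    (hne : ∃ i, HasInArc f i) (htail : ∀ j i s, IArc f j i s → HasInArc f j) :
    ∃ S : Finset V, ∃ σ : V → Bool, S.Nonempty ∧ (∀ i ∈ S, HasInArc f i) ∧
      Traps f S σ ∧ Traps f S (fun k => !σ k) := by
  classical
  set G := interactionGraph f
  set N : Finset V := Finset.univ.filter (HasInArc f)
  have hmemN {i : V} : i ∈ N ↔ HasInArc f i := by simp [N]
  obtain ⟨u₀, hu₀, hinit⟩ := G.exists_initial (N := N)
    (by obtain ⟨i, hi⟩ := hne; exact ⟨i, hmemN.2 hi⟩)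
    (fun j i h => by
      obtain ⟨s, hs⟩ := SignedDigraph.arc_iff_exists_sArc.1 h
      exact hmemN.2 (htail j i s (sArc_interactionGraph.1 hs)))
  obtain ⟨σ, hσ⟩ := hNN.exists_balanced u₀
  set S := N.filter (G.SameComp u₀)
  have hmemS {i : V} : i ∈ S ↔ HasInArc f i ∧ G.SameComp u₀ i := by simp [S, N]
  have hbal : ∀ i ∈ S, ∀ j s, IArc f j i s → j ∈ S ∧ s = (σ j == σ i) := by
    intro i hi j s hs
    have hG : G.SArc j i s := sArc_interactionGraph.2 hs
    have hj := hinit j i (SignedDigraph.arc_iff_exists_sArc.2 ⟨s, hG⟩) (hmemS.1 hi).2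
    exact ⟨hmemS.2 ⟨htail j i s hs, hj⟩, hσ j i s hj.1 (hmemS.1 hi).2.2 hG⟩
  have hin : ∀ i ∈ S, HasInArc f i := fun i hi => (hmemS.1 hi).1
  refine ⟨S, σ, ⟨u₀, hmemS.2 ⟨hmemN.1 hu₀, G.reach_refl u₀, G.reach_refl u₀⟩⟩, hin,
    traps_of_balanced hbal hin, traps_of_balanced ?_ hin⟩
  intro i hi j s hs
  obtain ⟨hj, rfl⟩ := hbal i hi j s hs
  exact ⟨hj, by cases σ j <;> cases σ i <;> rfl⟩

theorem exists_fixedPoint_of_traps (hNN : (interactionGraph f).NoNegativeCycle)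
    {A : Finset V} {c : V → Bool} (hA : Traps f A c) : ∃ y, f y = y ∧ ∀ a ∈ A, y a = c a := by
  by_cases hAu : A = Finset.univ
  · subst hAu
    exact ⟨c, funext fun a => hA c (fun _ _ => rfl) a (Finset.mem_univ a), fun _ _ => rfl⟩
  obtain ⟨S, σ, hSne, hSA, hS⟩ :
      ∃ S σ, S.Nonempty ∧ Disjoint S A ∧ Traps (freeze f A c) S σ := by
    by_cases hconst : ∃ v ∉ A, ¬ HasInArc (freeze f A c) v
    · obtain ⟨v, hvA, hv⟩ := hconst
      refine ⟨{v}, fun _ => freeze f A c c v, Finset.singleton_nonempty v,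
        Finset.disjoint_singleton_left.2 hvA, fun z _ a ha => ?_⟩
      rw [Finset.mem_singleton.1 ha]
      exact apply_eq_of_not_hasInArc hv z c
    · push Not at hconst
      obtain ⟨v, -, hv⟩ := Finset.exists_of_ssubset (Finset.ssubset_univ_iff.2 hAu)
      obtain ⟨S, σ, hSne, hSin, hS, -⟩ :=
        exists_traps_and_traps_not (hNN.mono interactionGraph_freeze_le) ⟨v, hconst v hv⟩
          (fun j i s h => hconst j (iArc_freeze h).1)
      exact ⟨S, σ, hSne, Finset.disjoint_left.2 fun s hs hsA =>
        hA.not_hasInArc_freeze hsA (hSin s hs), hS⟩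
  obtain ⟨y, hy, hyc⟩ := exists_fixedPoint_of_traps hNN (hA.union hS hSA)
  refine ⟨y, hy, fun a ha => ?_⟩
  rw [hyc a (Finset.mem_union_right _ ha),
    S.piecewise_eq_of_notMem _ _ (Finset.disjoint_right.1 hSA ha)]
termination_by Aᶜ.card
decreasing_by
  obtain ⟨s, hs⟩ := hSne
  refine Finset.card_lt_card (Finset.compl_ssubset_compl.2 ?_)
  exact (Finset.ssubset_iff_of_subset Finset.subset_union_right).2
    ⟨s, Finset.mem_union_left _ hs, Finset.disjoint_left.1 hSA hs⟩

theorem not_existsUnique_fixedPoint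
    (hsign : (interactionGraph f).NoNegativeCycle ∨ (interactionGraph f).NoPositiveCycle)
    (hne : ∃ i, HasInArc f i) (htail : ∀ j i s, IArc f j i s → HasInArc f j) :
    ¬ ∃! x, f x = x := by
  rintro ⟨x, hx, hunique⟩
  rcases hsign with hNN | hNP
  · obtain ⟨S, σ, ⟨s, hs⟩, -, hσ, hσ'⟩ := exists_traps_and_traps_not hNN hne htail
    obtain ⟨y₁, hy₁, hy₁σ⟩ := exists_fixedPoint_of_traps hNN hσ
    obtain ⟨y₂, hy₂, hy₂σ⟩ := exists_fixedPoint_of_traps hNN hσ'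
    have h := hy₁σ s hs
    rw [hunique y₁ hy₁, ← hunique y₂ hy₂, hy₂σ s hs] at h
    cases σ s <;> simp at h
  · -- following arcs coherent with `x` backwards closes up into a positive cycle
    obtain ⟨u, cyc, hcyc⟩ :=
      ((interactionGraph f).coherentPart x).exists_isCycle_of_forall_exists_arc
        (N := {i | HasInArc f i}) hne fun i hi => by
          obtain ⟨j, hj⟩ := exists_coherent_iArc hx hi
          exact ⟨j, htail j i _ hj, SignedDigraph.arc_iff_exists_sArc.2
            ⟨_, SignedDigraph.sArc_coherentPart.2 ⟨sArc_interactionGraph.2 hj, rfl⟩⟩⟩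
    have h := SignedDigraph.walkSign_of_isWalk_coherentPart hcyc.2.1
    rw [hcyc.2.2.1, beq_self_eq_true,
      hNP u cyc (hcyc.mono (SignedDigraph.coherentPart_le x))] at h
    exact Bool.false_ne_true h

end BooleanNetwork

section Synchronization

variable {V : Type*} [DecidableEq V] {f : (V → Bool) → V → Bool}

lemma List.exists_eq_append_cons_of_cons_sublist {α : Type*} {a : α} {l w : List α}
    (h : (a :: l).Sublist w) : ∃ s t, w = s ++ a :: t ∧ l.Sublist t := by
  obtain ⟨r₁, r₂, rfl, ha, hl⟩ := List.cons_sublist_iff.1 h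
  obtain ⟨s, t, rfl⟩ := List.append_of_mem ha
  exact ⟨s, t ++ r₂, by simp, hl.trans (List.sublist_append_right t r₂)⟩

lemma wordUpdate_cons (i : V) (w : List V) (z : V → Bool) :
    wordUpdate f (i :: w) z = wordUpdate f w (localUpdate f i z) := rfl

lemma wordUpdate_append (w₁ w₂ : List V) (z : V → Bool) :
    wordUpdate f (w₁ ++ w₂) z = wordUpdate f w₂ (wordUpdate f w₁ z) :=
  List.foldl_append

lemma wordUpdate_of_fixedPoint {x : V → Bool} (hx : f x = x) (w : List V) :
    wordUpdate f w x = x := by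
  induction w with
  | nil => rfl
  | cons i w ih =>
    rw [wordUpdate_cons, show localUpdate f i x = x by simp [localUpdate, hx]]
    exact ih

lemma Traps.wordUpdate {A : Finset V} {c : V → Bool} (hA : Traps f A c) (w : List V)
    {z : V → Bool} (hz : ∀ a ∈ A, z a = c a) : ∀ a ∈ A, wordUpdate f w z a = c a := by
  induction w generalizing z with
  | nil => exact hz
  | cons i w ih =>
    refine ih fun a ha => ?_
    rcases eq_or_ne a i with rfl | hai
    · exact (Function.update_self ..).trans (hA z hz a ha)
    · exact (Function.update_of_ne hai ..).trans (hz a ha)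

variable [Fintype V]

variable {x : V → Bool}

theorem exists_not_hasInArc_freeze
    (hsign : (interactionGraph f).NoNegativeCycle ∨ (interactionGraph f).NoPositiveCycle)
    (hx : f x = x) (hunique : ∀ y, f y = y → y = x) {A : Finset V} (hA : Traps f A x)
    (hAu : A ≠ Finset.univ) :
    ∃ v ∉ A, ¬ HasInArc (freeze f A x) v := by
  by_contra! hall
  obtain ⟨v, -, hv⟩ := Finset.exists_of_ssubset (Finset.ssubset_univ_iff.2 hAu)
  refine not_existsUnique_fixedPoint
    (hsign.imp (·.mono interactionGraph_freeze_le) (·.mono interactionGraph_freeze_le))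
    ⟨v, hall v hv⟩ (fun j i s h => hall j (iArc_freeze h).1) ⟨x, ?_, ?_⟩
  · exact hA.freeze_fixedPoint_iff.2 ⟨hx, fun _ _ => rfl⟩
  · exact fun y hy => hunique y (hA.freeze_fixedPoint_iff.1 hy).1

theorem exists_syncOrder_of_traps
    (hsign : (interactionGraph f).NoNegativeCycle ∨ (interactionGraph f).NoPositiveCycle)
    (hx : f x = x) (hunique : ∀ y, f y = y → y = x) {A : Finset V} (hA : Traps f A x) :
    ∃ π : List V, π.Nodup ∧ (∀ v, v ∈ π ↔ v ∉ A) ∧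
      ∀ w, π.Sublist w → ∀ z, (∀ a ∈ A, z a = x a) → wordUpdate f w z = x := by
  by_cases hAu : A = Finset.univ
  · subst hAu
    refine ⟨[], List.nodup_nil, by simp, fun w _ z hz => ?_⟩
    obtain rfl : z = x := funext fun a => hz a (Finset.mem_univ a)
    exact wordUpdate_of_fixedPoint hx w
  obtain ⟨v, hvA, hv⟩ := exists_not_hasInArc_freeze hsign hx hunique hA hAu
  have hvx : ∀ z, (∀ a ∈ A, z a = x a) → f z v = x v := fun z hz => by
    rw [← freeze_eq_of_agree (f := f) hz, apply_eq_of_not_hasInArc hv z x,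
      freeze_eq_of_agree (fun _ _ => rfl), hx]
  have hA' : Traps f (insert v A) x := by
    intro z hz a ha
    have hzA : ∀ a ∈ A, z a = x a := fun a ha => hz a (Finset.mem_insert_of_mem ha)
    rcases Finset.mem_insert.1 ha with rfl | haA
    · exact hvx z hzA
    · exact hA z hzA a haA
  obtain ⟨π, hnd, hmem, hsync⟩ := exists_syncOrder_of_traps hsign hx hunique hA'
  refine ⟨v :: π, List.nodup_cons.2 ⟨fun h => (hmem v).1 h (Finset.mem_insert_self v A), hnd⟩,
    fun u => ?_, fun w hw z hz => ?_⟩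
  · by_cases huv : u = v
    · simp [huv, hvA]
    · simp [huv, hmem]
  obtain ⟨s, t, rfl, hπt⟩ := List.exists_eq_append_cons_of_cons_sublist hw
  rw [wordUpdate_append, wordUpdate_cons]
  have hs := hA.wordUpdate s hz
  refine hsync t hπt _ fun a ha => ?_
  rcases Finset.mem_insert.1 ha with rfl | haA
  · exact (Function.update_self ..).trans (hvx _ hs)
  · exact (Function.update_of_ne (by rintro rfl; exact hvA haA) ..).trans (hs a haA)
termination_by Aᶜ.card
decreasing_by exact Finset.card_lt_card (Finset.compl_ssubset_compl.2 (Finset.ssubset_insert hvA))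

end Synchronization

/-- Proposition 6 of the paper. Let `G` be a signed digraph in which
all cycles have the same sign, and let `f` be a Boolean network on `G` with exactly one
fixed point. Then there is a word `π` in which every vertex occurs exactly once such
that every word containing `π` as a subsequence synchronizes `f`; in particular `π`
itself synchronizes `f`. -/
theorem statement9 {V : Type} [Fintype V] [DecidableEq V]
    (G : SignedDigraph V)
    (hsign : G.NoNegativeCycle ∨ G.NoPositiveCycle)
    (f : (V → Bool) → V → Bool) (hf : IsBNOn f G)
    (hfix : ∃! x : V → Bool, f x = x) :
    ∃ π : List V, π.Nodup ∧ (∀ v : V, v ∈ π) ∧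
      (∀ w : List V, π.Sublist w → SyncWord f w) ∧ SyncWord f π := by
  obtain ⟨x, hx, hunique⟩ := hfix
  rw [hf.eq_interactionGraph] at hsign
  obtain ⟨π, hnd, hmem, hsync⟩ := exists_syncOrder_of_traps hsign hx hunique
    (A := ∅) (fun _ _ a ha => absurd ha (Finset.notMem_empty a))
  have hsync' : ∀ w, π.Sublist w → SyncWord f w :=
    fun w hw => ⟨x, fun z => hsync w hw z (fun a ha => absurd ha (Finset.notMem_empty a))⟩
  exact ⟨π, hnd, fun v => (hmem v).2 (Finset.notMem_empty v), hsync', hsync' π (.refl π)⟩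
end

section
/- Let G be a signed digraph with vertex set V and let f be a Boolean network on G. Let I ⊆ V be such that the induced subgraph G∖I (on V∖I) is acyclic, and let w be a topological sort of G∖I, i.e., a word listing each vertex of V∖I exactly once such that for every arc of G∖I from j to i, the letter j occurs before the letter i in w. Then for every pair of configurations x, y on V with x_I = y_I (x and y agree on I), we have f^w(x) = f^w(y). -/
/-! A component `f_i` of a Boolean network on `G` depends only on the in-neighbours of `i`:
flipping any other coordinate, one at a time, never changes it. Along a topological sort of
`G∖I` every in-neighbour of the updated letter lies in `I` or was updated before it, so by
induction `f^u(x)` and `f^u(y)` agree on `I` and on all letters of each prefix `u` of `w`. -/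

open Function

namespace IsBNOn

variable {V : Type*} [DecidableEq V] {G : SignedDigraph V} {f : (V → Bool) → V → Bool}

theorem arc_of_apply_update_ne (hf : IsBNOn f G) {x : V → Bool} {j i : V}
    (h : f (update x j false) i ≠ f (update x j true) i) : G.Arc j i := by
  have hflip : f (update (update x j false) j true) i ≠ f (update x j false) i := by
    rwa [update_idem, ne_comm]
  cases hfalse : f (update x j false) i
  · exact Or.inl <| (hf.1 j i).2 ⟨_, update_self .., hfalse, by simpa [hfalse] using hflip⟩
  · exact Or.inr <| (hf.2 j i).2 ⟨_, update_self .., hfalse, by simpa [hfalse] using hflip⟩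

theorem apply_update_of_not_arc (hf : IsBNOn f G) {j i : V} (hji : ¬ G.Arc j i)
    (x : V → Bool) (b : Bool) : f (update x j b) i = f x i := by
  have hconst : f (update x j false) i = f (update x j true) i :=
    not_not.1 (mt hf.arc_of_apply_update_ne hji)
  conv_rhs => rw [← update_eq_self j x]
  cases b <;> cases x j <;> simp only [hconst]

theorem apply_eq_of_forall_arc (hf : IsBNOn f G) [Fintype V] {i : V} {x y : V → Bool}
    (hxy : ∀ j, G.Arc j i → x j = y j) : f x i = f y i := by
  suffices ∀ (s : Finset V) (x : V → Bool), (∀ j ∉ s, x j = y j) →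
      (∀ j, G.Arc j i → x j = y j) → f x i = f y i from
    this Finset.univ x (by simp) hxy
  intro s
  induction s using Finset.induction_on with
  | empty => exact fun x hout _ => congrArg (f · i) (funext fun j => hout j (by simp))
  | insert a s _ ih =>
    intro x hout harc
    have hstep : f x i = f (update x a (y a)) i := by
      by_cases ha : G.Arc a i
      · rw [← harc a ha, update_eq_self]
      · exact (hf.apply_update_of_not_arc ha x (y a)).symm
    rw [hstep]
    apply ih
    · intro j hj
      by_cases hja : j = a
      · simp [hja]
      · simpa [hja] using hout j (by simp [hja, hj])
    · intro j hj
      by_cases hja : j = a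
      · simp [hja]
      · simpa [hja] using harc j hj

theorem eqOn_wordUpdate (hf : IsBNOn f G) [Fintype V] {S : Set V} {x y : V → Bool}
    (hxy : Set.EqOn x y S) (u : List V)
    (hu : ∀ u₁ i u₂, u = u₁ ++ i :: u₂ → ∀ j, G.Arc j i → j ∈ S ∨ j ∈ u₁) :
    Set.EqOn (wordUpdate f u x) (wordUpdate f u y) (S ∪ {v | v ∈ u}) := by
  induction u using List.reverseRecOn with
  | nil => simpa [wordUpdate] using hxy
  | append_singleton u i ih =>
    have ih := ih fun u₁ k u₂ hu₁ => hu u₁ k (u₂ ++ [i]) (by simp [hu₁])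
    have hnew : ∀ z : V → Bool,
        wordUpdate f (u ++ [i]) z = localUpdate f i (wordUpdate f u z) := by
      simp [wordUpdate]
    intro v hv
    rw [hnew, hnew]
    by_cases hvi : v = i
    · subst hvi
      simp only [localUpdate, update_self]
      exact hf.apply_eq_of_forall_arc fun j hj => ih (hu u v [] rfl j hj)
    · simp only [localUpdate, update_of_ne hvi]
      exact ih (by simpa [hvi] using hv)

end IsBNOn

theorem statement16_general {V : Type} [Fintype V] [DecidableEq V]
    (G : SignedDigraph V)
    (f : (V → Bool) → V → Bool) (hf : IsBNOn f G)
    (I : Set V)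
    (w : List V)
    (hwmem : ∀ v : V, v ∈ w ↔ v ∉ I)
    (htopo : ∀ j i : V, j ∉ I → i ∉ I → G.Arc j i → w.idxOf j < w.idxOf i) :
    ∀ x y : V → Bool, (∀ i ∈ I, x i = y i) →
      wordUpdate f w x = wordUpdate f w y := by
  intro x y hxy
  have hprec : ∀ u₁ i u₂, w = u₁ ++ i :: u₂ → ∀ j, G.Arc j i → j ∈ I ∨ j ∈ u₁ := by
    intro u₁ i u₂ hw j hji
    refine or_iff_not_imp_left.2 fun hj => ?_
    have hi : i ∈ u₁ ++ [i] := by simp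
    have hiw : w.idxOf i < u₁.length + 1 := by
      simpa using (List.IsPrefix.mem_iff_idxOf_lt_length ⟨u₂, by simp [hw]⟩ i).1 hi
    have hiI : i ∉ I := (hwmem i).1 (by simp [hw])
    exact (List.IsPrefix.mem_iff_idxOf_lt_length ⟨_, hw.symm⟩ j).2
      (by have := htopo j i hj hiI hji; omega)
  funext v
  refine hf.eqOn_wordUpdate hxy w hprec ?_
  by_cases hv : v ∈ I
  · exact Or.inl hv
  · exact Or.inr ((hwmem v).2 hv)

/-- Lemma 15 of the paper. Let `f` be a Boolean network on a signed
digraph `G` with vertex set `V`, let `I ⊆ V` be such that `G∖I` is acyclic, and let `w`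
be a topological sort of `G∖I`. Then for configurations `x, y` agreeing on `I`,
`f^w(x) = f^w(y)`. -/
theorem statement16 {V : Type} [Fintype V] [DecidableEq V]
    (G : SignedDigraph V)
    (f : (V → Bool) → V → Bool) (hf : IsBNOn f G)
    (I : Set V)
    (hacyc : ∀ u steps, ¬ (G.induce Iᶜ).IsCycle u steps)
    (w : List V)
    (hwmem : ∀ v : V, v ∈ w ↔ v ∉ I) (hwnodup : w.Nodup)
    (htopo : ∀ j i : V, j ∉ I → i ∉ I → G.Arc j i → w.idxOf j < w.idxOf i) :
    ∀ x y : V → Bool, (∀ i ∈ I, x i = y i) →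
      wordUpdate f w x = wordUpdate f w y :=
  statement16_general G f hf I w hwmem htopo
end
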